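/- arXiv:math/0311388 — 3 statements merged into one kernel-verified Lean document; each statement's English description precedes it below -/
import Mathlib

section
/- Let A be a subspace of the degree-2 homogeneous polynomials S²V* on a finite-dimensional vector space V, and define the p-th prolongation A^{(p)} = (A ⊗ S^p V*) ∩ S^{p+2} V*. Then every point of the k-th secant variety σ_k(Base(A)) of the base locus of A lies in the base locus of A^{(k-1)}; that is, every polynomial in A^{(k-1)} vanishes on any linear combination v_1 + ... + v_k of k points of the affine cone over Base(A). -/
open MvPolynomial

/-!
For `x = v₁ + ⋯ + v_k` and `Q` homogeneous of degree `k + 1`, Euler's formula gives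
`(k+1)! Q(x) = (D_x^{k+1} Q)(x)`. Expanding `D_x = ∑ D_{v_i}` multilinearly, every term is a
`(k+1)`-fold polarization in directions drawn from `k` vectors, so some `v_i` occurs twice.
Polarizations commute, so the term is `D_{v_i}² R` with `R ∈ A` a quadric, and that is the
constant `2 R(v_i) = 0`.
-/

/-- The directional derivative (polarization) of a polynomial `P` on `ℂⁿ` in direction `v`. -/
noncomputable def dirDeriv {n : ℕ} (v : Fin n → ℂ) (P : MvPolynomial (Fin n) ℂ) :
    MvPolynomial (Fin n) ℂ :=
  ∑ i : Fin n, v i • MvPolynomial.pderiv i P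

/-- The `p`-th prolongation `A^(p)` of a space of quadrics `A ⊆ S²V*`: the homogeneous
polynomials of degree `p + 2` all of whose `p`-fold iterated polarizations lie in `A`. -/
def prolongation {n : ℕ} (A : Submodule ℂ (MvPolynomial (Fin n) ℂ)) (p : ℕ) :
    Set (MvPolynomial (Fin n) ℂ) :=
  {Q | Q.IsHomogeneous (p + 2) ∧
    ∀ vs : Fin p → (Fin n → ℂ), (List.ofFn vs).foldr dirDeriv Q ∈ A}

theorem MvPolynomial.pderiv_pderiv_comm {R σ : Type*} [CommRing R] (i j : σ)
    (P : MvPolynomial σ R) : pderiv i (pderiv j P) = pderiv j (pderiv i P) := by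
  have hbracket : ⁅pderiv i, pderiv j⁆ = (0 : Derivation R (MvPolynomial σ R) _) :=
    derivation_ext fun k => by
      classical
      rw [Derivation.commutator_apply, pderiv_X, pderiv_X]
      simp [Pi.single_apply, apply_ite]
  rw [← sub_eq_zero, ← Derivation.commutator_apply, hbracket, Derivation.zero_apply]

section dirDeriv

variable {n : ℕ}

theorem dirDeriv_sum_left {ι : Type*} (s : Finset ι) (w : ι → Fin n → ℂ)
    (P : MvPolynomial (Fin n) ℂ) :
    dirDeriv (∑ j ∈ s, w j) P = ∑ j ∈ s, dirDeriv (w j) P := by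
  simp only [dirDeriv, Finset.sum_apply, Finset.sum_smul]
  exact Finset.sum_comm

theorem dirDeriv_sum_right {ι : Type*} (v : Fin n → ℂ) (s : Finset ι)
    (F : ι → MvPolynomial (Fin n) ℂ) :
    dirDeriv v (∑ j ∈ s, F j) = ∑ j ∈ s, dirDeriv v (F j) := by
  simp only [dirDeriv, map_sum, Finset.smul_sum]
  exact Finset.sum_comm

theorem dirDeriv_comm (v w : Fin n → ℂ) (P : MvPolynomial (Fin n) ℂ) :
    dirDeriv v (dirDeriv w P) = dirDeriv w (dirDeriv v P) := by
  simp only [dirDeriv, map_sum, Derivation.map_smul, Finset.smul_sum]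
  rw [Finset.sum_comm]
  refine Finset.sum_congr rfl fun i _ => Finset.sum_congr rfl fun j _ => ?_
  rw [pderiv_pderiv_comm, smul_comm]

instance : LeftCommutative (dirDeriv (n := n)) := ⟨dirDeriv_comm⟩

theorem MvPolynomial.IsHomogeneous.dirDeriv {P : MvPolynomial (Fin n) ℂ} {d : ℕ}
    (hP : P.IsHomogeneous d) (v : Fin n → ℂ) : (_root_.dirDeriv v P).IsHomogeneous (d - 1) :=
  (homogeneousSubmodule _ ℂ (d - 1)).sum_mem fun i _ =>
    Submodule.smul_mem _ (v i) hP.pderiv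

theorem MvPolynomial.IsHomogeneous.eval_dirDeriv_self {P : MvPolynomial (Fin n) ℂ} {d : ℕ}
    (hP : P.IsHomogeneous d) (x : Fin n → ℂ) :
    eval x (_root_.dirDeriv x P) = d * eval x P := by
  simpa [_root_.dirDeriv, smul_eval] using congr(eval x $(hP.sum_X_mul_pderiv))

theorem MvPolynomial.IsHomogeneous.eval_iterate_dirDeriv_self {P : MvPolynomial (Fin n) ℂ}
    {d : ℕ} (hP : P.IsHomogeneous d) (x : Fin n → ℂ) :
    eval x ((_root_.dirDeriv x)^[d] P) = d.factorial * eval x P := by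
  induction d generalizing P with
  | zero => simp
  | succ d ih =>
    rw [Function.iterate_succ_apply, ih (hP.dirDeriv x), hP.eval_dirDeriv_self,
      Nat.factorial_succ]
    push_cast
    ring

theorem dirDeriv_dirDeriv_self_eq_zero {R : MvPolynomial (Fin n) ℂ} (hR : R.IsHomogeneous 2)
    {a : Fin n → ℂ} (ha : eval a R = 0) : dirDeriv a (dirDeriv a R) = 0 := by
  have hconst : (dirDeriv a (dirDeriv a R)).totalDegree = 0 :=
    (totalDegree_zero_iff_isHomogeneous _).mpr ((hR.dirDeriv a).dirDeriv a)
  rw [totalDegree_eq_zero_iff_eq_C] at hconst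
  have heval := (hR.dirDeriv a).eval_dirDeriv_self a
  rw [hR.eval_dirDeriv_self, ha, hconst, eval_C] at heval
  rw [hconst, heval]
  simp

theorem iterate_dirDeriv_sum {k : ℕ} (v : Fin k → Fin n → ℂ) (m : ℕ)
    (Q : MvPolynomial (Fin n) ℂ) :
    (dirDeriv (∑ i, v i))^[m] Q
      = ∑ s : Fin m → Fin k, (List.ofFn (fun j => v (s j))).foldr dirDeriv Q := by
  induction m with
  | zero => simp
  | succ m ih =>
    rw [Function.iterate_succ_apply', ih, dirDeriv_sum_right,
      ← (Fin.consEquiv fun _ => Fin k).sum_comp, Fintype.sum_prod_type, Finset.sum_comm]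
    refine Finset.sum_congr rfl fun s _ => ?_
    rw [dirDeriv_sum_left]
    simp [List.ofFn_succ]

end dirDeriv

section prolongation

variable {n : ℕ} {A : Submodule ℂ (MvPolynomial (Fin n) ℂ)} {p : ℕ} {Q : MvPolynomial (Fin n) ℂ}

theorem foldr_dirDeriv_mem_of_mem_prolongation (hQ : Q ∈ prolongation A p)
    {l : List (Fin n → ℂ)} (hl : l.length = p) : l.foldr dirDeriv Q ∈ A := by
  subst hl
  simpa using hQ.2 l.get

theorem foldr_dirDeriv_eq_zero_of_duplicate (hA : ∀ P ∈ A, P.IsHomogeneous 2)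
    (hQ : Q ∈ prolongation A p) {l : List (Fin n → ℂ)} (hl : l.length = p + 2)
    {a : Fin n → ℂ} (hdup : l.Duplicate a) (ha : ∀ P ∈ A, eval a P = 0) :
    l.foldr dirDeriv Q = 0 := by
  obtain ⟨t, hperm⟩ := (List.duplicate_iff_sublist.mp hdup).exists_perm_append
  have ht : t.length = p := by simpa [hperm.length_eq] using hl
  have hR := foldr_dirDeriv_mem_of_mem_prolongation hQ ht
  rw [hperm.foldr_eq]
  exact dirDeriv_dirDeriv_self_eq_zero (hA _ hR) (ha _ hR)

theorem iterate_dirDeriv_sum_eq_zero (hA : ∀ P ∈ A, P.IsHomogeneous 2)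
    (hQ : Q ∈ prolongation A p) (v : Fin (p + 1) → Fin n → ℂ)
    (hv : ∀ i, ∀ P ∈ A, eval (v i) P = 0) :
    (dirDeriv (∑ i, v i))^[p + 2] Q = 0 := by
  rw [iterate_dirDeriv_sum]
  refine Finset.sum_eq_zero fun s _ => ?_
  obtain ⟨a, hdup⟩ : ∃ a, (List.ofFn fun j => v (s j)).Duplicate a := by
    rw [List.exists_duplicate_iff_not_nodup, List.nodup_ofFn]
    obtain ⟨i, j, hij, hs⟩ := Fintype.exists_ne_map_eq_of_card_lt s (by simp)
    exact fun hinj => hij (hinj (congrArg v hs))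
  obtain ⟨j, rfl⟩ := List.mem_ofFn.mp hdup.mem
  exact foldr_dirDeriv_eq_zero_of_duplicate hA hQ (by simp) hdup (hv (s j))

end prolongation

/-- Prolongation property: if `A ⊆ S²V*` is a system of quadrics, then every polynomial in the
`(k-1)`-st prolongation `A^(k-1)` vanishes on any sum `v₁ + ⋯ + v_k` of `k` points of the
affine cone over the base locus of `A`; i.e. `σ_k(Base A) ⊆ Base (A^(k-1))`. -/
theorem secant_subset_base_prolongation {n : ℕ} (A : Submodule ℂ (MvPolynomial (Fin n) ℂ))
    (hA : ∀ P ∈ A, MvPolynomial.IsHomogeneous P 2) (k : ℕ) (hk : 1 ≤ k)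
    (Q : MvPolynomial (Fin n) ℂ) (hQ : Q ∈ prolongation A (k - 1))
    (v : Fin k → (Fin n → ℂ)) (hv : ∀ i, ∀ P ∈ A, MvPolynomial.eval (v i) P = 0) :
    MvPolynomial.eval (∑ i, v i) Q = 0 := by
  obtain ⟨p, rfl⟩ := Nat.exists_eq_add_of_le' hk
  rw [Nat.add_sub_cancel] at hQ
  have heuler := hQ.1.eval_iterate_dirDeriv_self (∑ i, v i)
  rw [iterate_dirDeriv_sum_eq_zero hA hQ v hv, map_zero] at heuler
  exact (mul_eq_zero.mp heuler.symm).resolve_left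
    (Nat.cast_ne_zero.mpr (Nat.factorial_ne_zero _))
end

section
/- Let A, B, C be complex vector spaces of dimensions 3, 3, 4 with bases e₁,e₂,e₃; f₁,f₂,f₃; g₁,...,g₄. Choose the five decomposable tensors p₁ = e₁⊗f₁⊗g₁, p₂ = e₂⊗f₂⊗g₂, p₃ = e₃⊗f₃⊗g₃, p₄ = (e₁+e₂+e₃)⊗(f₁+f₂+f₃)⊗g₄, p₅ = (e₁+e₂+e₃)⊗(f₁+αf₂+βf₃)⊗(g₁+g₂+g₃+g₄), where α, β are integers with α, β, α−β, α−1, β−1 all nonzero and pairwise conditions ensuring genericity (e.g., α, β coprime and |α−β| ≠ 1). Then the sum of the five affine tangent spaces to the Segre variety Seg(PA×PB×PC) at p₁,...,p₅ equals all of A⊗B⊗C (which is 36-dimensional). Consequently σ₅(Seg(P²×P²×P³)) = P³⁵. -/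
set_option maxHeartbeats 1600000

/-- The decomposable tensor `a ⊗ b ⊗ c ∈ A ⊗ B ⊗ C` for `A = B = ℂ³`, `C = ℂ⁴`,
encoded as a tri-indexed array. -/
def dec (a : Fin 3 → ℂ) (b : Fin 3 → ℂ) (c : Fin 4 → ℂ) :
    Fin 3 → Fin 3 → Fin 4 → ℂ :=
  fun i j l => a i * b j * c l

/-- The affine tangent space to the Segre variety `Seg(PA × PB × PC)` at the decomposable
tensor `a ⊗ b ⊗ c`, namely `A⊗b⊗c + a⊗B⊗c + a⊗b⊗C`. -/
noncomputable def tangentSpace (a : Fin 3 → ℂ) (b : Fin 3 → ℂ) (c : Fin 4 → ℂ) :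
    Submodule ℂ (Fin 3 → Fin 3 → Fin 4 → ℂ) :=
  Submodule.span ℂ ({t | ∃ x : Fin 3 → ℂ, t = dec x b c} ∪
    {t | ∃ y : Fin 3 → ℂ, t = dec a y c} ∪ {t | ∃ z : Fin 4 → ℂ, t = dec a b z})

/-- The standard basis vectors of `ℂ³` resp. `ℂ⁴`. -/
noncomputable def e (i : Fin 3) : Fin 3 → ℂ := Pi.single i 1
noncomputable def g (l : Fin 4) : Fin 4 → ℂ := Pi.single l 1

lemma mem_tangent_x (a b c x) : dec x b c ∈ tangentSpace a b c :=
  Submodule.subset_span (Set.mem_union_left _ (Set.mem_union_left _ ⟨x, rfl⟩))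
lemma mem_tangent_y (a b c y) : dec a y c ∈ tangentSpace a b c :=
  Submodule.subset_span (Set.mem_union_left _ (Set.mem_union_right _ ⟨y, rfl⟩))
lemma mem_tangent_z (a b c z) : dec a b z ∈ tangentSpace a b c :=
  Submodule.subset_span (Set.mem_union_right _ ⟨z, rfl⟩)

lemma e_apply (i j : Fin 3) : e i j = if j = i then 1 else 0 := Pi.single_apply ..
lemma g_apply (i j : Fin 4) : g i j = if j = i then 1 else 0 := Pi.single_apply ..
lemma dec_apply (a b c i j l) : dec a b c i j l = a i * b j * c l := rfl

/-- The sum of the affine tangent spaces to `Seg(P² × P² × P³)` at the five decomposable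
tensors `e₁⊗f₁⊗g₁`, `e₂⊗f₂⊗g₂`, `e₃⊗f₃⊗g₃`, `(e₁+e₂+e₃)⊗(f₁+f₂+f₃)⊗g₄` and
`(e₁+e₂+e₃)⊗(f₁+αf₂+βf₃)⊗(g₁+g₂+g₃+g₄)` is all of `A ⊗ B ⊗ C ≅ ℂ³⁶`, when the integers
`α, β` are coprime with `|α-β| ≠ 1` and `α, β, α-β, α-1, β-1` all nonzero.  Consequently
(by Terracini's lemma) `σ₅(Seg(P² × P² × P³)) = P³⁵`. -/
theorem five_tangent_spaces_fill (α β : ℤ)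
    (hcop : IsCoprime α β) (hαβ : (α - β).natAbs ≠ 1)
    (hα : α ≠ 0) (hβ : β ≠ 0) (hne : α ≠ β) (hα1 : α ≠ 1) (hβ1 : β ≠ 1) :
    tangentSpace (e 0) (e 0) (g 0) ⊔ tangentSpace (e 1) (e 1) (g 1)
      ⊔ tangentSpace (e 2) (e 2) (g 2)
      ⊔ tangentSpace (e 0 + e 1 + e 2) (e 0 + e 1 + e 2) (g 3)
      ⊔ tangentSpace (e 0 + e 1 + e 2) (e 0 + (α : ℂ) • e 1 + (β : ℂ) • e 2)
          (g 0 + g 1 + g 2 + g 3)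
      = ⊤ := by
  have hα1' : (α:ℂ) - 1 ≠ 0 := sub_ne_zero.mpr (by exact_mod_cast hα1)
  have hβ1' : (β:ℂ) - 1 ≠ 0 := sub_ne_zero.mpr (by exact_mod_cast hβ1)
  have hβα' : (β:ℂ) - (α:ℂ) ≠ 0 := sub_ne_zero.mpr (by exact_mod_cast hne.symm)
  set u0 : Fin 3 → ℂ := e 0 + e 1 + e 2 with hu0
  set v0 : Fin 3 → ℂ := e 0 + (α : ℂ) • e 1 + (β : ℂ) • e 2 with hv0
  set w0 : Fin 4 → ℂ := g 0 + g 1 + g 2 + g 3 with hw0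
  set S : Submodule ℂ (Fin 3 → Fin 3 → Fin 4 → ℂ) :=
    tangentSpace (e 0) (e 0) (g 0) ⊔ tangentSpace (e 1) (e 1) (g 1)
      ⊔ tangentSpace (e 2) (e 2) (g 2) ⊔ tangentSpace u0 u0 (g 3)
      ⊔ tangentSpace u0 v0 w0 with hSdef
  have hT1 : tangentSpace (e 0) (e 0) (g 0) ≤ S :=
    le_sup_of_le_left (le_sup_of_le_left (le_sup_of_le_left le_sup_left))
  have hT2 : tangentSpace (e 1) (e 1) (g 1) ≤ S :=
    le_sup_of_le_left (le_sup_of_le_left (le_sup_of_le_left le_sup_right))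
  have hT3 : tangentSpace (e 2) (e 2) (g 2) ≤ S :=
    le_sup_of_le_left (le_sup_of_le_left le_sup_right)
  have hT4 : tangentSpace u0 u0 (g 3) ≤ S := le_sup_of_le_left le_sup_right
  have hT5 : tangentSpace u0 v0 w0 ≤ S := le_sup_right
  have hk000 : dec (e 0) (e 0) (g 0) ∈ S := hT1 (mem_tangent_x _ _ _ (e 0))
  have hk100 : dec (e 1) (e 0) (g 0) ∈ S := hT1 (mem_tangent_x _ _ _ (e 1))
  have hk200 : dec (e 2) (e 0) (g 0) ∈ S := hT1 (mem_tangent_x _ _ _ (e 2))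
  have hk010 : dec (e 0) (e 1) (g 0) ∈ S := hT1 (mem_tangent_y _ _ _ (e 1))
  have hk020 : dec (e 0) (e 2) (g 0) ∈ S := hT1 (mem_tangent_y _ _ _ (e 2))
  have hk001 : dec (e 0) (e 0) (g 1) ∈ S := hT1 (mem_tangent_z _ _ _ (g 1))
  have hk002 : dec (e 0) (e 0) (g 2) ∈ S := hT1 (mem_tangent_z _ _ _ (g 2))
  have hk003 : dec (e 0) (e 0) (g 3) ∈ S := hT1 (mem_tangent_z _ _ _ (g 3))
  have hk011 : dec (e 0) (e 1) (g 1) ∈ S := hT2 (mem_tangent_x _ _ _ (e 0))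
  have hk111 : dec (e 1) (e 1) (g 1) ∈ S := hT2 (mem_tangent_x _ _ _ (e 1))
  have hk211 : dec (e 2) (e 1) (g 1) ∈ S := hT2 (mem_tangent_x _ _ _ (e 2))
  have hk101 : dec (e 1) (e 0) (g 1) ∈ S := hT2 (mem_tangent_y _ _ _ (e 0))
  have hk121 : dec (e 1) (e 2) (g 1) ∈ S := hT2 (mem_tangent_y _ _ _ (e 2))
  have hk110 : dec (e 1) (e 1) (g 0) ∈ S := hT2 (mem_tangent_z _ _ _ (g 0))
  have hk112 : dec (e 1) (e 1) (g 2) ∈ S := hT2 (mem_tangent_z _ _ _ (g 2))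
  have hk113 : dec (e 1) (e 1) (g 3) ∈ S := hT2 (mem_tangent_z _ _ _ (g 3))
  have hk022 : dec (e 0) (e 2) (g 2) ∈ S := hT3 (mem_tangent_x _ _ _ (e 0))
  have hk122 : dec (e 1) (e 2) (g 2) ∈ S := hT3 (mem_tangent_x _ _ _ (e 1))
  have hk222 : dec (e 2) (e 2) (g 2) ∈ S := hT3 (mem_tangent_x _ _ _ (e 2))
  have hk202 : dec (e 2) (e 0) (g 2) ∈ S := hT3 (mem_tangent_y _ _ _ (e 0))
  have hk212 : dec (e 2) (e 1) (g 2) ∈ S := hT3 (mem_tangent_y _ _ _ (e 1))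
  have hk220 : dec (e 2) (e 2) (g 0) ∈ S := hT3 (mem_tangent_z _ _ _ (g 0))
  have hk221 : dec (e 2) (e 2) (g 1) ∈ S := hT3 (mem_tangent_z _ _ _ (g 1))
  have hk223 : dec (e 2) (e 2) (g 3) ∈ S := hT3 (mem_tangent_z _ _ _ (g 3))
  have hA0 : dec (e 0) u0 (g 3) ∈ S := hT4 (mem_tangent_x _ _ _ (e 0))
  have hA1 : dec (e 1) u0 (g 3) ∈ S := hT4 (mem_tangent_x _ _ _ (e 1))
  have hA2 : dec (e 2) u0 (g 3) ∈ S := hT4 (mem_tangent_x _ _ _ (e 2))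
  have hB0 : dec u0 (e 0) (g 3) ∈ S := hT4 (mem_tangent_y _ _ _ (e 0))
  have hB1 : dec u0 (e 1) (g 3) ∈ S := hT4 (mem_tangent_y _ _ _ (e 1))
  have hC0 : dec u0 u0 (g 0) ∈ S := hT4 (mem_tangent_z _ _ _ (g 0))
  have hC1 : dec u0 u0 (g 1) ∈ S := hT4 (mem_tangent_z _ _ _ (g 1))
  have hC2 : dec u0 u0 (g 2) ∈ S := hT4 (mem_tangent_z _ _ _ (g 2))
  have hD2 : dec (e 2) v0 w0 ∈ S := hT5 (mem_tangent_x _ _ _ (e 2))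
  have hG0 : dec u0 v0 (g 0) ∈ S := hT5 (mem_tangent_z _ _ _ (g 0))
  have hG1 : dec u0 v0 (g 1) ∈ S := hT5 (mem_tangent_z _ _ _ (g 1))
  have hG2 : dec u0 v0 (g 2) ∈ S := hT5 (mem_tangent_z _ _ _ (g 2))
  have hpA0p : (dec (e 0) u0 (g 3) - (dec (e 0) (e 0) (g 3))) ∈ S := (sub_mem hA0 hk003)
  have hpA1p : (dec (e 1) u0 (g 3) - (dec (e 1) (e 1) (g 3))) ∈ S := (sub_mem hA1 hk113)
  have hpA2p : (dec (e 2) u0 (g 3) - (dec (e 2) (e 2) (g 3))) ∈ S := (sub_mem hA2 hk223)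
  have hpB0p : (dec u0 (e 0) (g 3) - (dec (e 0) (e 0) (g 3))) ∈ S := (sub_mem hB0 hk003)
  have hpB1p : (dec u0 (e 1) (g 3) - (dec (e 1) (e 1) (g 3))) ∈ S := (sub_mem hB1 hk113)
  have hpC0p : (dec u0 u0 (g 0) - (dec (e 0) (e 0) (g 0) + dec (e 1) (e 0) (g 0) + dec (e 2) (e 0) (g 0) + dec (e 0) (e 1) (g 0) + dec (e 0) (e 2) (g 0) + dec (e 1) (e 1) (g 0) + dec (e 2) (e 2) (g 0))) ∈ S := (sub_mem hC0 (add_mem (add_mem (add_mem (add_mem (add_mem (add_mem hk000 hk100) hk200) hk010) hk020) hk110) hk220))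
  have hpC1p : (dec u0 u0 (g 1) - (dec (e 0) (e 0) (g 1) + dec (e 1) (e 0) (g 1) + dec (e 0) (e 1) (g 1) + dec (e 1) (e 1) (g 1) + dec (e 2) (e 1) (g 1) + dec (e 1) (e 2) (g 1) + dec (e 2) (e 2) (g 1))) ∈ S := (sub_mem hC1 (add_mem (add_mem (add_mem (add_mem (add_mem (add_mem hk001 hk101) hk011) hk111) hk211) hk121) hk221))
  have hpC2p : (dec u0 u0 (g 2) - (dec (e 0) (e 0) (g 2) + dec (e 1) (e 1) (g 2) + dec (e 0) (e 2) (g 2) + dec (e 1) (e 2) (g 2) + dec (e 2) (e 2) (g 2) + dec (e 2) (e 0) (g 2) + dec (e 2) (e 1) (g 2))) ∈ S := (sub_mem hC2 (add_mem (add_mem (add_mem (add_mem (add_mem (add_mem hk002 hk112) hk022) hk122) hk222) hk202) hk212))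
  have hpD2p : (dec (e 2) v0 w0 - (dec (e 2) (e 0) (g 0) + dec (e 2) (e 0) (g 2)) - ((α:ℂ)) • (dec (e 2) (e 1) (g 1) + dec (e 2) (e 1) (g 2)) - ((β:ℂ)) • (dec (e 2) (e 2) (g 0) + dec (e 2) (e 2) (g 1) + dec (e 2) (e 2) (g 2) + dec (e 2) (e 2) (g 3))) ∈ S := (sub_mem (sub_mem (sub_mem hD2 (add_mem hk200 hk202)) (Submodule.smul_mem _ _ (add_mem hk211 hk212))) (Submodule.smul_mem _ _ (add_mem (add_mem (add_mem hk220 hk221) hk222) hk223)))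
  have hpG0p : (dec u0 v0 (g 0) - (dec (e 0) (e 0) (g 0) + dec (e 1) (e 0) (g 0) + dec (e 2) (e 0) (g 0)) - ((α:ℂ)) • (dec (e 0) (e 1) (g 0) + dec (e 1) (e 1) (g 0)) - ((β:ℂ)) • (dec (e 0) (e 2) (g 0) + dec (e 2) (e 2) (g 0))) ∈ S := (sub_mem (sub_mem (sub_mem hG0 (add_mem (add_mem hk000 hk100) hk200)) (Submodule.smul_mem _ _ (add_mem hk010 hk110))) (Submodule.smul_mem _ _ (add_mem hk020 hk220)))
  have hpG1p : (dec u0 v0 (g 1) - (dec (e 0) (e 0) (g 1) + dec (e 1) (e 0) (g 1)) - ((α:ℂ)) • (dec (e 0) (e 1) (g 1) + dec (e 1) (e 1) (g 1) + dec (e 2) (e 1) (g 1)) - ((β:ℂ)) • (dec (e 1) (e 2) (g 1) + dec (e 2) (e 2) (g 1))) ∈ S := (sub_mem (sub_mem (sub_mem hG1 (add_mem hk001 hk101)) (Submodule.smul_mem _ _ (add_mem (add_mem hk011 hk111) hk211))) (Submodule.smul_mem _ _ (add_mem hk121 hk221)))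
  have hpG2p : (dec u0 v0 (g 2) - (dec (e 0) (e 0) (g 2) + dec (e 2) (e 0) (g 2)) - ((α:ℂ)) • (dec (e 1) (e 1) (g 2) + dec (e 2) (e 1) (g 2)) - ((β:ℂ)) • (dec (e 0) (e 2) (g 2) + dec (e 1) (e 2) (g 2) + dec (e 2) (e 2) (g 2))) ∈ S := (sub_mem (sub_mem (sub_mem hG2 (add_mem hk002 hk202)) (Submodule.smul_mem _ _ (add_mem hk112 hk212))) (Submodule.smul_mem _ _ (add_mem (add_mem hk022 hk122) hk222)))
  have hu012 : dec (e 0) (e 1) (g 2) ∈ S := by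
    have hid : dec (e 0) (e 1) (g 2) = ((α:ℂ)-1)⁻¹ • ((dec u0 v0 (g 2) - (dec (e 0) (e 0) (g 2) + dec (e 2) (e 0) (g 2)) - ((α:ℂ)) • (dec (e 1) (e 1) (g 2) + dec (e 2) (e 1) (g 2)) - ((β:ℂ)) • (dec (e 0) (e 2) (g 2) + dec (e 1) (e 2) (g 2) + dec (e 2) (e 2) (g 2))) - (dec u0 u0 (g 2) - (dec (e 0) (e 0) (g 2) + dec (e 1) (e 1) (g 2) + dec (e 0) (e 2) (g 2) + dec (e 1) (e 2) (g 2) + dec (e 2) (e 2) (g 2) + dec (e 2) (e 0) (g 2) + dec (e 2) (e 1) (g 2)))) := by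
      funext i' j' l'
      fin_cases i' <;> fin_cases j' <;> fin_cases l' <;>
        (simp only [hu0, hv0, hw0, dec_apply, Pi.add_apply, Pi.smul_apply, Pi.sub_apply,
          smul_eq_mul, e_apply, g_apply, Fin.ext_iff]; norm_num [show ((3:Fin 4):ℕ) = 3 from rfl, show ((2:Fin 4):ℕ) = 2 from rfl,
          show ((2:Fin 3):ℕ) = 2 from rfl]; try field_simp; try ring)
    rw [hid]
    exact Submodule.smul_mem _ _ (sub_mem hpG2p hpC2p)
  have hu102 : dec (e 1) (e 0) (g 2) ∈ S := by
    have hid : dec (e 1) (e 0) (g 2) = (dec u0 u0 (g 2) - (dec (e 0) (e 0) (g 2) + dec (e 1) (e 1) (g 2) + dec (e 0) (e 2) (g 2) + dec (e 1) (e 2) (g 2) + dec (e 2) (e 2) (g 2) + dec (e 2) (e 0) (g 2) + dec (e 2) (e 1) (g 2))) - dec (e 0) (e 1) (g 2) := by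
      funext i' j' l'
      fin_cases i' <;> fin_cases j' <;> fin_cases l' <;>
        (simp only [hu0, hv0, hw0, dec_apply, Pi.add_apply, Pi.smul_apply, Pi.sub_apply,
          smul_eq_mul, e_apply, g_apply, Fin.ext_iff]; norm_num [show ((3:Fin 4):ℕ) = 3 from rfl, show ((2:Fin 4):ℕ) = 2 from rfl,
          show ((2:Fin 3):ℕ) = 2 from rfl]; try field_simp; try ring)
    rw [hid]
    exact sub_mem hpC2p hu012
  have hu021 : dec (e 0) (e 2) (g 1) ∈ S := by
    have hid : dec (e 0) (e 2) (g 1) = ((β:ℂ)-1)⁻¹ • ((dec u0 v0 (g 1) - (dec (e 0) (e 0) (g 1) + dec (e 1) (e 0) (g 1)) - ((α:ℂ)) • (dec (e 0) (e 1) (g 1) + dec (e 1) (e 1) (g 1) + dec (e 2) (e 1) (g 1)) - ((β:ℂ)) • (dec (e 1) (e 2) (g 1) + dec (e 2) (e 2) (g 1))) - (dec u0 u0 (g 1) - (dec (e 0) (e 0) (g 1) + dec (e 1) (e 0) (g 1) + dec (e 0) (e 1) (g 1) + dec (e 1) (e 1) (g 1) + dec (e 2) (e 1) (g 1) + dec (e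 1) (e 2) (g 1) + dec (e 2) (e 2) (g 1)))) := by
      funext i' j' l'
      fin_cases i' <;> fin_cases j' <;> fin_cases l' <;>
        (simp only [hu0, hv0, hw0, dec_apply, Pi.add_apply, Pi.smul_apply, Pi.sub_apply,
          smul_eq_mul, e_apply, g_apply, Fin.ext_iff]; norm_num [show ((3:Fin 4):ℕ) = 3 from rfl, show ((2:Fin 4):ℕ) = 2 from rfl,
          show ((2:Fin 3):ℕ) = 2 from rfl]; try field_simp; try ring)
    rw [hid]
    exact Submodule.smul_mem _ _ (sub_mem hpG1p hpC1p)
  have hu201 : dec (e 2) (e 0) (g 1) ∈ S := by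
    have hid : dec (e 2) (e 0) (g 1) = (dec u0 u0 (g 1) - (dec (e 0) (e 0) (g 1) + dec (e 1) (e 0) (g 1) + dec (e 0) (e 1) (g 1) + dec (e 1) (e 1) (g 1) + dec (e 2) (e 1) (g 1) + dec (e 1) (e 2) (g 1) + dec (e 2) (e 2) (g 1))) - dec (e 0) (e 2) (g 1) := by
      funext i' j' l'
      fin_cases i' <;> fin_cases j' <;> fin_cases l' <;>
        (simp only [hu0, hv0, hw0, dec_apply, Pi.add_apply, Pi.smul_apply, Pi.sub_apply,
          smul_eq_mul, e_apply, g_apply, Fin.ext_iff]; norm_num [show ((3:Fin 4):ℕ) = 3 from rfl, show ((2:Fin 4):ℕ) = 2 from rfl,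
          show ((2:Fin 3):ℕ) = 2 from rfl]; try field_simp; try ring)
    rw [hid]
    exact sub_mem hpC1p hu021
  have hu120 : dec (e 1) (e 2) (g 0) ∈ S := by
    have hid : dec (e 1) (e 2) (g 0) = ((β:ℂ)-(α:ℂ))⁻¹ • ((dec u0 v0 (g 0) - (dec (e 0) (e 0) (g 0) + dec (e 1) (e 0) (g 0) + dec (e 2) (e 0) (g 0)) - ((α:ℂ)) • (dec (e 0) (e 1) (g 0) + dec (e 1) (e 1) (g 0)) - ((β:ℂ)) • (dec (e 0) (e 2) (g 0) + dec (e 2) (e 2) (g 0))) - (α:ℂ) • (dec u0 u0 (g 0) - (dec (e 0) (e 0) (g 0) + dec (e 1) (e 0) (g 0) + dec (e 2) (e 0) (g 0) + dec (e 0) (e 1) (g 0) + dec (e 0) (e 2) (g 0) + dec (e 1) (e 1) (g 0) + dec (e 2) (e 2) (g 0)))) := by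
      funext i' j' l'
      fin_cases i' <;> fin_cases j' <;> fin_cases l' <;>
        (simp only [hu0, hv0, hw0, dec_apply, Pi.add_apply, Pi.smul_apply, Pi.sub_apply,
          smul_eq_mul, e_apply, g_apply, Fin.ext_iff]; norm_num [show ((3:Fin 4):ℕ) = 3 from rfl, show ((2:Fin 4):ℕ) = 2 from rfl,
          show ((2:Fin 3):ℕ) = 2 from rfl]; try field_simp; try ring)
    rw [hid]
    exact Submodule.smul_mem _ _ (sub_mem hpG0p (Submodule.smul_mem _ _ hpC0p))
  have hu210 : dec (e 2) (e 1) (g 0) ∈ S := by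
    have hid : dec (e 2) (e 1) (g 0) = (dec u0 u0 (g 0) - (dec (e 0) (e 0) (g 0) + dec (e 1) (e 0) (g 0) + dec (e 2) (e 0) (g 0) + dec (e 0) (e 1) (g 0) + dec (e 0) (e 2) (g 0) + dec (e 1) (e 1) (g 0) + dec (e 2) (e 2) (g 0))) - dec (e 1) (e 2) (g 0) := by
      funext i' j' l'
      fin_cases i' <;> fin_cases j' <;> fin_cases l' <;>
        (simp only [hu0, hv0, hw0, dec_apply, Pi.add_apply, Pi.smul_apply, Pi.sub_apply,
          smul_eq_mul, e_apply, g_apply, Fin.ext_iff]; norm_num [show ((3:Fin 4):ℕ) = 3 from rfl, show ((2:Fin 4):ℕ) = 2 from rfl,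
          show ((2:Fin 3):ℕ) = 2 from rfl]; try field_simp; try ring)
    rw [hid]
    exact sub_mem hpC0p hu120
  have hu213 : dec (e 2) (e 1) (g 3) ∈ S := by
    have hid : dec (e 2) (e 1) (g 3) = ((α:ℂ)-1)⁻¹ • ((dec (e 2) v0 w0 - (dec (e 2) (e 0) (g 0) + dec (e 2) (e 0) (g 2)) - ((α:ℂ)) • (dec (e 2) (e 1) (g 1) + dec (e 2) (e 1) (g 2)) - ((β:ℂ)) • (dec (e 2) (e 2) (g 0) + dec (e 2) (e 2) (g 1) + dec (e 2) (e 2) (g 2) + dec (e 2) (e 2) (g 3))) - dec (e 2) (e 0) (g 1) - (α:ℂ) • dec (e 2) (e 1) (g 0) - (dec (e 2) u0 (g 3) - (dec (e 2) (e 2) (g 3)))) := by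
      funext i' j' l'
      fin_cases i' <;> fin_cases j' <;> fin_cases l' <;>
        (simp only [hu0, hv0, hw0, dec_apply, Pi.add_apply, Pi.smul_apply, Pi.sub_apply,
          smul_eq_mul, e_apply, g_apply, Fin.ext_iff]; norm_num [show ((3:Fin 4):ℕ) = 3 from rfl, show ((2:Fin 4):ℕ) = 2 from rfl,
          show ((2:Fin 3):ℕ) = 2 from rfl]; try field_simp; try ring)
    rw [hid]
    exact Submodule.smul_mem _ _ (sub_mem (sub_mem (sub_mem hpD2p hu201) (Submodule.smul_mem _ _ hu210)) hpA2p)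
  have hu203 : dec (e 2) (e 0) (g 3) ∈ S := by
    have hid : dec (e 2) (e 0) (g 3) = (dec (e 2) u0 (g 3) - (dec (e 2) (e 2) (g 3))) - dec (e 2) (e 1) (g 3) := by
      funext i' j' l'
      fin_cases i' <;> fin_cases j' <;> fin_cases l' <;>
        (simp only [hu0, hv0, hw0, dec_apply, Pi.add_apply, Pi.smul_apply, Pi.sub_apply,
          smul_eq_mul, e_apply, g_apply, Fin.ext_iff]; norm_num [show ((3:Fin 4):ℕ) = 3 from rfl, show ((2:Fin 4):ℕ) = 2 from rfl,
          show ((2:Fin 3):ℕ) = 2 from rfl]; try field_simp; try ring)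
    rw [hid]
    exact sub_mem hpA2p hu213
  have hu013 : dec (e 0) (e 1) (g 3) ∈ S := by
    have hid : dec (e 0) (e 1) (g 3) = (dec u0 (e 1) (g 3) - (dec (e 1) (e 1) (g 3))) - dec (e 2) (e 1) (g 3) := by
      funext i' j' l'
      fin_cases i' <;> fin_cases j' <;> fin_cases l' <;>
        (simp only [hu0, hv0, hw0, dec_apply, Pi.add_apply, Pi.smul_apply, Pi.sub_apply,
          smul_eq_mul, e_apply, g_apply, Fin.ext_iff]; norm_num [show ((3:Fin 4):ℕ) = 3 from rfl, show ((2:Fin 4):ℕ) = 2 from rfl,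
          show ((2:Fin 3):ℕ) = 2 from rfl]; try field_simp; try ring)
    rw [hid]
    exact sub_mem hpB1p hu213
  have hu023 : dec (e 0) (e 2) (g 3) ∈ S := by
    have hid : dec (e 0) (e 2) (g 3) = (dec (e 0) u0 (g 3) - (dec (e 0) (e 0) (g 3))) - dec (e 0) (e 1) (g 3) := by
      funext i' j' l'
      fin_cases i' <;> fin_cases j' <;> fin_cases l' <;>
        (simp only [hu0, hv0, hw0, dec_apply, Pi.add_apply, Pi.smul_apply, Pi.sub_apply,
          smul_eq_mul, e_apply, g_apply, Fin.ext_iff]; norm_num [show ((3:Fin 4):ℕ) = 3 from rfl, show ((2:Fin 4):ℕ) = 2 from rfl,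
          show ((2:Fin 3):ℕ) = 2 from rfl]; try field_simp; try ring)
    rw [hid]
    exact sub_mem hpA0p hu013
  have hu103 : dec (e 1) (e 0) (g 3) ∈ S := by
    have hid : dec (e 1) (e 0) (g 3) = (dec u0 (e 0) (g 3) - (dec (e 0) (e 0) (g 3))) - dec (e 2) (e 0) (g 3) := by
      funext i' j' l'
      fin_cases i' <;> fin_cases j' <;> fin_cases l' <;>
        (simp only [hu0, hv0, hw0, dec_apply, Pi.add_apply, Pi.smul_apply, Pi.sub_apply,
          smul_eq_mul, e_apply, g_apply, Fin.ext_iff]; norm_num [show ((3:Fin 4):ℕ) = 3 from rfl, show ((2:Fin 4):ℕ) = 2 from rfl,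
          show ((2:Fin 3):ℕ) = 2 from rfl]; try field_simp; try ring)
    rw [hid]
    exact sub_mem hpB0p hu203
  have hu123 : dec (e 1) (e 2) (g 3) ∈ S := by
    have hid : dec (e 1) (e 2) (g 3) = (dec (e 1) u0 (g 3) - (dec (e 1) (e 1) (g 3))) - dec (e 1) (e 0) (g 3) := by
      funext i' j' l'
      fin_cases i' <;> fin_cases j' <;> fin_cases l' <;>
        (simp only [hu0, hv0, hw0, dec_apply, Pi.add_apply, Pi.smul_apply, Pi.sub_apply,
          smul_eq_mul, e_apply, g_apply, Fin.ext_iff]; norm_num [show ((3:Fin 4):ℕ) = 3 from rfl, show ((2:Fin 4):ℕ) = 2 from rfl,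
          show ((2:Fin 3):ℕ) = 2 from rfl]; try field_simp; try ring)
    rw [hid]
    exact sub_mem hpA1p hu103
  have hE : ∀ (i : Fin 3) (j : Fin 3) (l : Fin 4), dec (e i) (e j) (g l) ∈ S := by
    intro i j l
    fin_cases i <;> fin_cases j <;> fin_cases l <;> assumption
  rw [eq_top_iff]
  intro x _
  have hrep : x = ∑ i : Fin 3, ∑ j : Fin 3, ∑ l : Fin 4, x i j l • dec (e i) (e j) (g l) := by
    funext a b c
    simp [Finset.sum_apply, dec_apply, e_apply, g_apply, mul_ite, ite_mul,
      Finset.sum_ite_eq, Finset.sum_ite_eq']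
  rw [hrep]
  exact Submodule.sum_mem _ fun i _ => Submodule.sum_mem _ fun j _ =>
    Submodule.sum_mem _ fun l _ => Submodule.smul_mem _ _ (hE i j l)
end

section
/- Let A, B, C be 4-dimensional complex vector spaces and let P be the degree-8 polynomial on A⊗B⊗C obtained by symmetrizing F = α₁α₂α₅α₆·(α₃∧α₄∧α₇∧α₈)·(β₁∧β₂∧β₃∧β₈)(β₄∧β₅∧β₆∧β₇)·(γ₁∧γ₂∧γ₃∧γ₄)(γ₅∧γ₆∧γ₇∧γ₈) over S₈ (a highest weight vector of S_{5111}A⊗S_{2222}B⊗S_{2222}C). Then P vanishes identically on all tensors of the form a₁⊗b₁⊗c₁ + ... + a₅⊗b₅⊗c₅, i.e., on the fifth secant variety σ₅(Seg(P³×P³×P³)). -/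
/-- The determinant of four vectors of `ℂ⁴` (the wedge of the four coordinate covectors
`γ₁∧γ₂∧γ₃∧γ₄` evaluated on four vectors). -/
noncomputable def det4 (w x y z : Fin 4 → ℂ) : ℂ := Matrix.det (Matrix.of ![w, x, y, z])

/-- The multilinear form `F` on eight decomposable tensors `aᵢ ⊗ bᵢ ⊗ cᵢ` in `A ⊗ B ⊗ C`
(all spaces `ℂ⁴`), a highest weight vector of `S₅₁₁₁A ⊗ S₂₂₂₂B ⊗ S₂₂₂₂C`:
`F = α₁(a₁)α₁(a₂)α₁(a₅)α₁(a₆) · (α₁∧α₂∧α₃∧α₄)(a₃,a₄,a₇,a₈) ·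
 (β₁∧β₂∧β₃∧β₄)(b₁,b₂,b₃,b₈)(β₁∧β₂∧β₃∧β₄)(b₄,b₅,b₆,b₇) ·
 (γ₁∧γ₂∧γ₃∧γ₄)(c₁,c₂,c₃,c₄)(γ₁∧γ₂∧γ₃∧γ₄)(c₅,c₆,c₇,c₈)` (indices shifted to `0,…,7`). -/
noncomputable def F5111 (a b c : Fin 8 → (Fin 4 → ℂ)) : ℂ :=
  a 0 0 * a 1 0 * a 4 0 * a 5 0 * det4 (a 2) (a 3) (a 6) (a 7) *
  det4 (b 0) (b 1) (b 2) (b 7) * det4 (b 3) (b 4) (b 5) (b 6) *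
  det4 (c 0) (c 1) (c 2) (c 3) * det4 (c 4) (c 5) (c 6) (c 7)


lemma det4_expand (w x y z : Fin 4 → ℂ) : det4 w x y z =
    w 0 * x 1 * y 2 * z 3 - w 0 * x 1 * y 3 * z 2 - w 0 * x 2 * y 1 * z 3 + w 0 * x 2 * y 3 * z 1
  + w 0 * x 3 * y 1 * z 2 - w 0 * x 3 * y 2 * z 1
  - w 1 * x 0 * y 2 * z 3 + w 1 * x 0 * y 3 * z 2 + w 1 * x 2 * y 0 * z 3 - w 1 * x 2 * y 3 * z 0
  - w 1 * x 3 * y 0 * z 2 + w 1 * x 3 * y 2 * z 0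
  + w 2 * x 0 * y 1 * z 3 - w 2 * x 0 * y 3 * z 1 - w 2 * x 1 * y 0 * z 3 + w 2 * x 1 * y 3 * z 0
  + w 2 * x 3 * y 0 * z 1 - w 2 * x 3 * y 1 * z 0
  - w 3 * x 0 * y 1 * z 2 + w 3 * x 0 * y 2 * z 1 + w 3 * x 1 * y 0 * z 2 - w 3 * x 1 * y 2 * z 0
  - w 3 * x 2 * y 0 * z 1 + w 3 * x 2 * y 1 * z 0 := by
  simp [det4, Matrix.det_succ_row_zero, Fin.sum_univ_succ, Fin.succAbove,
    show (Fin.succ 2 : Fin 4) = 3 from rfl, show (Fin.castSucc 2 : Fin 4) = 2 from rfl,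
    show ((1 : Fin 4) < 3) = True from by decide]
  ring

lemma dz12 (x y z : Fin 4 → ℂ) : det4 x x y z = 0 := by rw [det4_expand]; ring
lemma dz13 (x y z : Fin 4 → ℂ) : det4 x y x z = 0 := by rw [det4_expand]; ring
lemma dz14 (x y z : Fin 4 → ℂ) : det4 x y z x = 0 := by rw [det4_expand]; ring
lemma dz23 (x y z : Fin 4 → ℂ) : det4 y x x z = 0 := by rw [det4_expand]; ring
lemma dz24 (x y z : Fin 4 → ℂ) : det4 y x z x = 0 := by rw [det4_expand]; ring
lemma dz34 (x y z : Fin 4 → ℂ) : det4 y z x x = 0 := by rw [det4_expand]; ring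

lemma det4_swap24 (w x y z : Fin 4 → ℂ) : det4 w z y x = -det4 w x y z := by
  rw [det4_expand, det4_expand]; ring

/-- exchange identity, version where the exchanged vectors sit in the last slot of the
first determinant and the first slot of the second determinant. -/
lemma swap_id (x0 x1 x2 p q x4 x5 x6 : Fin 4 → ℂ)
    (h4 : x4 = x0 ∨ x4 = x1 ∨ x4 = x2) (h5 : x5 = x0 ∨ x5 = x1 ∨ x5 = x2)
    (h6 : x6 = x0 ∨ x6 = x1 ∨ x6 = x2) :
    det4 x0 x1 x2 p * det4 q x4 x5 x6 = det4 x0 x1 x2 q * det4 p x4 x5 x6 := by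
  rcases h4 with rfl | rfl | rfl <;> rcases h5 with rfl | rfl | rfl <;>
    rcases h6 with rfl | rfl | rfl <;> (simp only [det4_expand]; ring)

/-- exchange identity, version where the exchanged vectors sit in the last slots of both
determinants. -/
lemma swap_id' (x0 x1 x2 p q x4 x5 x6 : Fin 4 → ℂ)
    (h4 : x4 = x0 ∨ x4 = x1 ∨ x4 = x2) (h5 : x5 = x0 ∨ x5 = x1 ∨ x5 = x2)
    (h6 : x6 = x0 ∨ x6 = x1 ∨ x6 = x2) :
    det4 x0 x1 x2 p * det4 x4 x5 x6 q = det4 x0 x1 x2 q * det4 x4 x5 x6 p := by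
  rcases h4 with rfl | rfl | rfl <;> rcases h5 with rfl | rfl | rfl <;>
    rcases h6 with rfl | rfl | rfl <;> (simp only [det4_expand]; ring)

/-- `u` and `v` appear together in one of the five determinantal factors of `F5111`. -/
def Share (u v : Fin 8) : Prop :=
  ((u = 2 ∨ u = 3 ∨ u = 6 ∨ u = 7) ∧ (v = 2 ∨ v = 3 ∨ v = 6 ∨ v = 7)) ∨
  ((u = 0 ∨ u = 1 ∨ u = 2 ∨ u = 7) ∧ (v = 0 ∨ v = 1 ∨ v = 2 ∨ v = 7)) ∨
  ((u = 3 ∨ u = 4 ∨ u = 5 ∨ u = 6) ∧ (v = 3 ∨ v = 4 ∨ v = 5 ∨ v = 6)) ∨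
  ((u = 0 ∨ u = 1 ∨ u = 2 ∨ u = 3) ∧ (v = 0 ∨ v = 1 ∨ v = 2 ∨ v = 3)) ∨
  ((u = 4 ∨ u = 5 ∨ u = 6 ∨ u = 7) ∧ (v = 4 ∨ v = 5 ∨ v = 6 ∨ v = 7))

instance (u v : Fin 8) : Decidable (Share u v) := by unfold Share; infer_instance

lemma F_zero_of_share (y z w : Fin 8 → Fin 4 → ℂ) (u v : Fin 8) (hne : u ≠ v)
    (hs : Share u v) (hy : y u = y v) (hz : z u = z v) (hw : w u = w v) :
    F5111 y z w = 0 := by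
  rcases hs with ⟨hu, hv⟩ | ⟨hu, hv⟩ | ⟨hu, hv⟩ | ⟨hu, hv⟩ | ⟨hu, hv⟩ <;>
    rcases hu with rfl | rfl | rfl | rfl <;> rcases hv with rfl | rfl | rfl | rfl <;>
      first
        | exact absurd rfl hne
        | simp [F5111, hy, hz, hw, dz12, dz13, dz14, dz23, dz24, dz34]

lemma tri : ∀ u v w : Fin 8, u ≠ v → u ≠ w → v ≠ w →
    Share u v ∨ Share u w ∨ Share v w := by decide

lemma orient : ∀ u v : Fin 8, u ≠ v → ¬ Share u v →
    ((u = 0 ∨ u = 1 ∨ u = 2) ∧ (v = 4 ∨ v = 5 ∨ v = 6)) ∨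
    ((v = 0 ∨ v = 1 ∨ v = 2) ∧ (u = 4 ∨ u = 5 ∨ u = 6)) := by decide

lemma share_swap : ∀ u v : Fin 8, Share u v →
    Share (Equiv.swap 3 7 u) (Equiv.swap 3 7 v) := by decide

lemma rpick : ∀ r1 r2 r3 : Fin 8, (r1 = 4 ∨ r1 = 5 ∨ r1 = 6) → (r2 = 4 ∨ r2 = 5 ∨ r2 = 6) →
    (r3 = 4 ∨ r3 = 5 ∨ r3 = 6) → r1 ≠ r2 → r1 ≠ r3 → r2 ≠ r3 →
    (r1 = 4 ∨ r2 = 4 ∨ r3 = 4) ∧ (r1 = 5 ∨ r2 = 5 ∨ r3 = 5) ∧ (r1 = 6 ∨ r2 = 6 ∨ r3 = 6) := by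
  intro r1 r2 r3 h1 h2 h3 h12 h13 h23
  rcases h1 with rfl | rfl | rfl <;> rcases h2 with rfl | rfl | rfl <;>
    rcases h3 with rfl | rfl | rfl <;>
    first
      | exact absurd rfl h12
      | exact absurd rfl h13
      | exact absurd rfl h23
      | decide

lemma partner (z : Fin 8 → Fin 4 → ℂ) {l r : Fin 8} (hl : l = 0 ∨ l = 1 ∨ l = 2)
    (h : z l = z r) : z r = z 0 ∨ z r = z 1 ∨ z r = z 2 := by
  rcases hl with rfl | rfl | rfl
  exacts [Or.inl h.symm, Or.inr (Or.inl h.symm), Or.inr (Or.inr h.symm)]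

lemma e0 : Equiv.swap (3 : Fin 8) 7 0 = 0 := by decide
lemma e1 : Equiv.swap (3 : Fin 8) 7 1 = 1 := by decide
lemma e2 : Equiv.swap (3 : Fin 8) 7 2 = 2 := by decide
lemma e3 : Equiv.swap (3 : Fin 8) 7 3 = 7 := by decide
lemma e4 : Equiv.swap (3 : Fin 8) 7 4 = 4 := by decide
lemma e5 : Equiv.swap (3 : Fin 8) 7 5 = 5 := by decide
lemma e6 : Equiv.swap (3 : Fin 8) 7 6 = 6 := by decide
lemma e7 : Equiv.swap (3 : Fin 8) 7 7 = 3 := by decide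

/-- The key sign identity: if the values of `z` (resp. `w`) at slots 4,5,6 all occur among
its values at slots 0,1,2, then precomposing with the transposition (3 7) changes the sign
of `F5111`. -/
lemma F_swap (y z w : Fin 8 → Fin 4 → ℂ)
    (hz4 : z 4 = z 0 ∨ z 4 = z 1 ∨ z 4 = z 2) (hz5 : z 5 = z 0 ∨ z 5 = z 1 ∨ z 5 = z 2)
    (hz6 : z 6 = z 0 ∨ z 6 = z 1 ∨ z 6 = z 2)
    (hw4 : w 4 = w 0 ∨ w 4 = w 1 ∨ w 4 = w 2) (hw5 : w 5 = w 0 ∨ w 5 = w 1 ∨ w 5 = w 2)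
    (hw6 : w 6 = w 0 ∨ w 6 = w 1 ∨ w 6 = w 2) :
    F5111 (fun i => y (Equiv.swap 3 7 i)) (fun i => z (Equiv.swap 3 7 i))
      (fun i => w (Equiv.swap 3 7 i)) = - F5111 y z w := by
  have hA : det4 (y 2) (y 7) (y 6) (y 3) = -det4 (y 2) (y 3) (y 6) (y 7) := det4_swap24 _ _ _ _
  have hB : det4 (z 0) (z 1) (z 2) (z 3) * det4 (z 7) (z 4) (z 5) (z 6)
      = det4 (z 0) (z 1) (z 2) (z 7) * det4 (z 3) (z 4) (z 5) (z 6) :=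
    swap_id _ _ _ _ _ _ _ _ hz4 hz5 hz6
  have hC : det4 (w 0) (w 1) (w 2) (w 7) * det4 (w 4) (w 5) (w 6) (w 3)
      = det4 (w 0) (w 1) (w 2) (w 3) * det4 (w 4) (w 5) (w 6) (w 7) :=
    swap_id' _ _ _ _ _ _ _ _ hw4 hw5 hw6
  simp only [F5111, e0, e1, e2, e3, e4, e5, e6, e7]
  linear_combination
    (y 0 0 * y 1 0 * y 4 0 * y 5 0 * det4 (z 0) (z 1) (z 2) (z 3) * det4 (z 7) (z 4) (z 5) (z 6)
      * det4 (w 0) (w 1) (w 2) (w 7) * det4 (w 4) (w 5) (w 6) (w 3)) * hA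
    + (-(y 0 0 * y 1 0 * y 4 0 * y 5 0 * det4 (y 2) (y 3) (y 6) (y 7))
      * det4 (w 0) (w 1) (w 2) (w 7) * det4 (w 4) (w 5) (w 6) (w 3)) * hB
    + (-(y 0 0 * y 1 0 * y 4 0 * y 5 0 * det4 (y 2) (y 3) (y 6) (y 7))
      * det4 (z 0) (z 1) (z 2) (z 7) * det4 (z 3) (z 4) (z 5) (z 6)) * hC

lemma pair_share_zero (A B C : Fin 8 → Fin 4 → ℂ) (σ : Equiv.Perm (Fin 8)) (p q : Fin 8)
    (hpq : p ≠ q) (hs : Share (σ.symm p) (σ.symm q))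
    (hA : A p = A q) (hB : B p = B q) (hC : C p = C q) :
    F5111 (fun i => A (σ i)) (fun i => B (σ i)) (fun i => C (σ i)) = 0 ∧
    F5111 (fun i => A ((σ * Equiv.swap (3:Fin 8) 7) i)) (fun i => B ((σ * Equiv.swap (3:Fin 8) 7) i))
      (fun i => C ((σ * Equiv.swap (3:Fin 8) 7) i)) = 0 := by
  have hne : σ.symm p ≠ σ.symm q := fun h => hpq (σ.symm.injective h)
  constructor
  · exact F_zero_of_share _ _ _ (σ.symm p) (σ.symm q) hne hs
      (by simp only [Equiv.apply_symm_apply]; exact hA)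
      (by simp only [Equiv.apply_symm_apply]; exact hB)
      (by simp only [Equiv.apply_symm_apply]; exact hC)
  · exact F_zero_of_share _ _ _ (Equiv.swap (3:Fin 8) 7 (σ.symm p)) (Equiv.swap (3:Fin 8) 7 (σ.symm q))
      ((Equiv.swap (3:Fin 8) 7).injective.ne hne) (share_swap _ _ hs)
      (by simp only [Equiv.Perm.mul_apply, Equiv.swap_apply_self, Equiv.apply_symm_apply]; exact hA)
      (by simp only [Equiv.Perm.mul_apply, Equiv.swap_apply_self, Equiv.apply_symm_apply]; exact hB)
      (by simp only [Equiv.Perm.mul_apply, Equiv.swap_apply_self, Equiv.apply_symm_apply]; exact hC)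

lemma sum_zero_case1 (A B C : Fin 8 → Fin 4 → ℂ) (p q r : Fin 8)
    (hpq : p ≠ q) (hpr : p ≠ r) (hqr : q ≠ r)
    (hA1 : A p = A q) (hA2 : A p = A r) (hB1 : B p = B q) (hB2 : B p = B r)
    (hC1 : C p = C q) (hC2 : C p = C r) :
    ∑ σ : Equiv.Perm (Fin 8),
      F5111 (fun i => A (σ i)) (fun i => B (σ i)) (fun i => C (σ i)) = 0 := by
  apply Finset.sum_eq_zero
  intro σ _
  have d1 : σ.symm p ≠ σ.symm q := fun h => hpq (σ.symm.injective h)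
  have d2 : σ.symm p ≠ σ.symm r := fun h => hpr (σ.symm.injective h)
  have d3 : σ.symm q ≠ σ.symm r := fun h => hqr (σ.symm.injective h)
  rcases tri _ _ _ d1 d2 d3 with hs | hs | hs
  · exact F_zero_of_share _ _ _ _ _ d1 hs
      (by simp only [Equiv.apply_symm_apply]; exact hA1)
      (by simp only [Equiv.apply_symm_apply]; exact hB1)
      (by simp only [Equiv.apply_symm_apply]; exact hC1)
  · exact F_zero_of_share _ _ _ _ _ d2 hs
      (by simp only [Equiv.apply_symm_apply]; exact hA2)
      (by simp only [Equiv.apply_symm_apply]; exact hB2)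
      (by simp only [Equiv.apply_symm_apply]; exact hC2)
  · exact F_zero_of_share _ _ _ _ _ d3 hs
      (by simp only [Equiv.apply_symm_apply]; exact hA1.symm.trans hA2)
      (by simp only [Equiv.apply_symm_apply]; exact hB1.symm.trans hB2)
      (by simp only [Equiv.apply_symm_apply]; exact hC1.symm.trans hC2)

lemma sum_zero_case2 (A B C : Fin 8 → Fin 4 → ℂ) (p1 q1 p2 q2 p3 q3 : Fin 8)
    (d1 : p1 ≠ q1) (d2 : p1 ≠ p2) (d3 : p1 ≠ q2) (d4 : p1 ≠ p3) (d5 : p1 ≠ q3)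
    (d6 : q1 ≠ p2) (d7 : q1 ≠ q2) (d8 : q1 ≠ p3) (d9 : q1 ≠ q3)
    (d10 : p2 ≠ q2) (d11 : p2 ≠ p3) (d12 : p2 ≠ q3) (d13 : q2 ≠ p3) (d14 : q2 ≠ q3)
    (d15 : p3 ≠ q3)
    (hA1 : A p1 = A q1) (hB1 : B p1 = B q1) (hC1 : C p1 = C q1)
    (hA2 : A p2 = A q2) (hB2 : B p2 = B q2) (hC2 : C p2 = C q2)
    (hA3 : A p3 = A q3) (hB3 : B p3 = B q3) (hC3 : C p3 = C q3) :
    ∑ σ : Equiv.Perm (Fin 8),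
      F5111 (fun i => A (σ i)) (fun i => B (σ i)) (fun i => C (σ i)) = 0 := by
  apply Finset.sum_ninvolution (fun σ => σ * Equiv.swap (3:Fin 8) 7)
  · -- main cancellation
    intro σ
    have D1 : σ.symm p1 ≠ σ.symm q1 := fun h => d1 (σ.symm.injective h)
    have D2 : σ.symm p2 ≠ σ.symm q2 := fun h => d10 (σ.symm.injective h)
    have D3 : σ.symm p3 ≠ σ.symm q3 := fun h => d15 (σ.symm.injective h)
    by_cases s1 : Share (σ.symm p1) (σ.symm q1)
    · obtain ⟨z1, z2⟩ := pair_share_zero A B C σ p1 q1 d1 s1 hA1 hB1 hC1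
      rw [z1, z2, add_zero]
    by_cases s2 : Share (σ.symm p2) (σ.symm q2)
    · obtain ⟨z1, z2⟩ := pair_share_zero A B C σ p2 q2 d10 s2 hA2 hB2 hC2
      rw [z1, z2, add_zero]
    by_cases s3 : Share (σ.symm p3) (σ.symm q3)
    · obtain ⟨z1, z2⟩ := pair_share_zero A B C σ p3 q3 d15 s3 hA3 hB3 hC3
      rw [z1, z2, add_zero]
    -- surviving case : all three pairs are "never wedged together" edges
    have hv1B : B (σ (σ.symm p1)) = B (σ (σ.symm q1)) := by
      simp only [Equiv.apply_symm_apply]; exact hB1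
    have hv1C : C (σ (σ.symm p1)) = C (σ (σ.symm q1)) := by
      simp only [Equiv.apply_symm_apply]; exact hC1
    have hv2B : B (σ (σ.symm p2)) = B (σ (σ.symm q2)) := by
      simp only [Equiv.apply_symm_apply]; exact hB2
    have hv2C : C (σ (σ.symm p2)) = C (σ (σ.symm q2)) := by
      simp only [Equiv.apply_symm_apply]; exact hC2
    have hv3B : B (σ (σ.symm p3)) = B (σ (σ.symm q3)) := by
      simp only [Equiv.apply_symm_apply]; exact hB3
    have hv3C : C (σ (σ.symm p3)) = C (σ (σ.symm q3)) := by
      simp only [Equiv.apply_symm_apply]; exact hC3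
    have O1 : ∃ l r : Fin 8, (l = 0 ∨ l = 1 ∨ l = 2) ∧ (r = 4 ∨ r = 5 ∨ r = 6) ∧
        B (σ l) = B (σ r) ∧ C (σ l) = C (σ r) ∧ (r = σ.symm p1 ∨ r = σ.symm q1) := by
      rcases orient _ _ D1 s1 with ⟨hu, hv⟩ | ⟨hv, hu⟩
      · exact ⟨_, _, hu, hv, hv1B, hv1C, Or.inr rfl⟩
      · exact ⟨_, _, hv, hu, hv1B.symm, hv1C.symm, Or.inl rfl⟩
    have O2 : ∃ l r : Fin 8, (l = 0 ∨ l = 1 ∨ l = 2) ∧ (r = 4 ∨ r = 5 ∨ r = 6) ∧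
        B (σ l) = B (σ r) ∧ C (σ l) = C (σ r) ∧ (r = σ.symm p2 ∨ r = σ.symm q2) := by
      rcases orient _ _ D2 s2 with ⟨hu, hv⟩ | ⟨hv, hu⟩
      · exact ⟨_, _, hu, hv, hv2B, hv2C, Or.inr rfl⟩
      · exact ⟨_, _, hv, hu, hv2B.symm, hv2C.symm, Or.inl rfl⟩
    have O3 : ∃ l r : Fin 8, (l = 0 ∨ l = 1 ∨ l = 2) ∧ (r = 4 ∨ r = 5 ∨ r = 6) ∧
        B (σ l) = B (σ r) ∧ C (σ l) = C (σ r) ∧ (r = σ.symm p3 ∨ r = σ.symm q3) := by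
      rcases orient _ _ D3 s3 with ⟨hu, hv⟩ | ⟨hv, hu⟩
      · exact ⟨_, _, hu, hv, hv3B, hv3C, Or.inr rfl⟩
      · exact ⟨_, _, hv, hu, hv3B.symm, hv3C.symm, Or.inl rfl⟩
    obtain ⟨l1, r1, hl1, hr1, hb1, hc1, hm1⟩ := O1
    obtain ⟨l2, r2, hl2, hr2, hb2, hc2, hm2⟩ := O2
    obtain ⟨l3, r3, hl3, hr3, hb3, hc3, hm3⟩ := O3
    have R12 : r1 ≠ r2 := by
      rcases hm1 with rfl | rfl <;> rcases hm2 with rfl | rfl <;>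
        exact fun h => absurd (σ.symm.injective h) (by assumption)
    have R13 : r1 ≠ r3 := by
      rcases hm1 with rfl | rfl <;> rcases hm3 with rfl | rfl <;>
        exact fun h => absurd (σ.symm.injective h) (by assumption)
    have R23 : r2 ≠ r3 := by
      rcases hm2 with rfl | rfl <;> rcases hm3 with rfl | rfl <;>
        exact fun h => absurd (σ.symm.injective h) (by assumption)
    obtain ⟨c4, c5, c6⟩ := rpick r1 r2 r3 hr1 hr2 hr3 R12 R13 R23
    have hz4 : B (σ 4) = B (σ 0) ∨ B (σ 4) = B (σ 1) ∨ B (σ 4) = B (σ 2) := by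
      rcases c4 with h | h | h
      · rw [h] at hb1; exact partner (fun i => B (σ i)) hl1 hb1
      · rw [h] at hb2; exact partner (fun i => B (σ i)) hl2 hb2
      · rw [h] at hb3; exact partner (fun i => B (σ i)) hl3 hb3
    have hz5 : B (σ 5) = B (σ 0) ∨ B (σ 5) = B (σ 1) ∨ B (σ 5) = B (σ 2) := by
      rcases c5 with h | h | h
      · rw [h] at hb1; exact partner (fun i => B (σ i)) hl1 hb1
      · rw [h] at hb2; exact partner (fun i => B (σ i)) hl2 hb2
      · rw [h] at hb3; exact partner (fun i => B (σ i)) hl3 hb3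
    have hz6 : B (σ 6) = B (σ 0) ∨ B (σ 6) = B (σ 1) ∨ B (σ 6) = B (σ 2) := by
      rcases c6 with h | h | h
      · rw [h] at hb1; exact partner (fun i => B (σ i)) hl1 hb1
      · rw [h] at hb2; exact partner (fun i => B (σ i)) hl2 hb2
      · rw [h] at hb3; exact partner (fun i => B (σ i)) hl3 hb3
    have hw4 : C (σ 4) = C (σ 0) ∨ C (σ 4) = C (σ 1) ∨ C (σ 4) = C (σ 2) := by
      rcases c4 with h | h | h
      · rw [h] at hc1; exact partner (fun i => C (σ i)) hl1 hc1
      · rw [h] at hc2; exact partner (fun i => C (σ i)) hl2 hc2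
      · rw [h] at hc3; exact partner (fun i => C (σ i)) hl3 hc3
    have hw5 : C (σ 5) = C (σ 0) ∨ C (σ 5) = C (σ 1) ∨ C (σ 5) = C (σ 2) := by
      rcases c5 with h | h | h
      · rw [h] at hc1; exact partner (fun i => C (σ i)) hl1 hc1
      · rw [h] at hc2; exact partner (fun i => C (σ i)) hl2 hc2
      · rw [h] at hc3; exact partner (fun i => C (σ i)) hl3 hc3
    have hw6 : C (σ 6) = C (σ 0) ∨ C (σ 6) = C (σ 1) ∨ C (σ 6) = C (σ 2) := by
      rcases c6 with h | h | h
      · rw [h] at hc1; exact partner (fun i => C (σ i)) hl1 hc1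
      · rw [h] at hc2; exact partner (fun i => C (σ i)) hl2 hc2
      · rw [h] at hc3; exact partner (fun i => C (σ i)) hl3 hc3
    have h2 : F5111 (fun i => A (σ (Equiv.swap (3:Fin 8) 7 i))) (fun i => B (σ (Equiv.swap (3:Fin 8) 7 i)))
        (fun i => C (σ (Equiv.swap (3:Fin 8) 7 i)))
        = - F5111 (fun i => A (σ i)) (fun i => B (σ i)) (fun i => C (σ i)) :=
      F_swap (fun i => A (σ i)) (fun i => B (σ i)) (fun i => C (σ i)) hz4 hz5 hz6 hw4 hw5 hw6
    simp only [Equiv.Perm.mul_apply]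
    rw [h2]
    ring
  · -- no fixed points
    intro σ _ h
    have h3 : (7 : Fin 8) = 3 := by
      have h' : Equiv.swap (3 : Fin 8) 7 = 1 := mul_left_cancel (a := σ) (by rw [mul_one]; exact h)
      have := congrArg (fun e : Equiv.Perm (Fin 8) => e 3) h'
      simpa [e3] using this
    exact absurd h3 (by decide)
  · -- maps into univ
    intro σ
    exact Finset.mem_univ _
  · intro σ
    rw [mul_assoc, Equiv.swap_mul_self, mul_one]

lemma pigeon (g : Fin 8 → Fin 5) :
    (∃ p q r : Fin 8, p ≠ q ∧ p ≠ r ∧ q ≠ r ∧ g p = g q ∧ g p = g r) ∨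
    (∃ p1 q1 p2 q2 p3 q3 : Fin 8, p1 ≠ q1 ∧ p1 ≠ p2 ∧ p1 ≠ q2 ∧ p1 ≠ p3 ∧ p1 ≠ q3 ∧
      q1 ≠ p2 ∧ q1 ≠ q2 ∧ q1 ≠ p3 ∧ q1 ≠ q3 ∧ p2 ≠ q2 ∧ p2 ≠ p3 ∧ p2 ≠ q3 ∧ q2 ≠ p3 ∧
      q2 ≠ q3 ∧ p3 ≠ q3 ∧ g p1 = g q1 ∧ g p2 = g q2 ∧ g p3 = g q3) := by
  classical
  by_cases h1 : ∃ v : Fin 5, 2 < (Finset.univ.filter fun i => g i = v).card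
  · left
    obtain ⟨v, hv⟩ := h1
    rw [Finset.two_lt_card_iff] at hv
    obtain ⟨p, q, r, hp, hq, hr, hpq, hpr, hqr⟩ := hv
    simp only [Finset.mem_filter] at hp hq hr
    exact ⟨p, q, r, hpq, hpr, hqr, hp.2.trans hq.2.symm, hp.2.trans hr.2.symm⟩
  · right
    push_neg at h1
    set T := Finset.univ.filter
      (fun v : Fin 5 => 2 ≤ (Finset.univ.filter fun i => g i = v).card) with hTdef
    have hsum : ∑ v : Fin 5, (Finset.univ.filter fun i => g i = v).card = 8 := by
      rw [← Finset.card_eq_sum_card_fiberwise (fun i (_ : i ∈ Finset.univ) => Finset.mem_univ (g i))]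
      simp
    have hTcard : 3 ≤ T.card := by
      have hsplit := Finset.sum_add_sum_compl T
        (fun v : Fin 5 => (Finset.univ.filter fun i => g i = v).card)
      have hb1 : ∑ v ∈ T, (Finset.univ.filter fun i => g i = v).card ≤ T.card * 2 := by
        have := Finset.sum_le_card_nsmul T
          (fun v : Fin 5 => (Finset.univ.filter fun i => g i = v).card) 2
          (fun v _ => h1 v)
        simpa [smul_eq_mul] using this
      have hb2 : ∑ v ∈ Tᶜ, (Finset.univ.filter fun i => g i = v).card ≤ Tᶜ.card * 1 := by
        have := Finset.sum_le_card_nsmul Tᶜ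
          (fun v : Fin 5 => (Finset.univ.filter fun i => g i = v).card) 1
          (fun v hv => by
            show (Finset.univ.filter fun i => g i = v).card ≤ 1
            have hv' : ¬ 2 ≤ (Finset.univ.filter fun i => g i = v).card := by
              intro h2
              have : v ∈ T := by
                rw [hTdef]; exact Finset.mem_filter.mpr ⟨Finset.mem_univ _, h2⟩
              exact (Finset.mem_compl.mp hv) this
            omega)
        simpa [smul_eq_mul] using this
      have hc : Tᶜ.card = 5 - T.card := by
        rw [Finset.card_compl]
        simp
      have hle : T.card ≤ 5 := by
        have := Finset.card_filter_le (Finset.univ : Finset (Fin 5))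
          (fun v : Fin 5 => 2 ≤ (Finset.univ.filter fun i => g i = v).card)
        simpa [← hTdef] using this
      rw [hsum] at hsplit
      omega
    obtain ⟨v1, v2, v3, hv1, hv2, hv3, h12, h13, h23⟩ :=
      Finset.two_lt_card_iff.mp (by omega : 2 < T.card)
    rw [hTdef, Finset.mem_filter] at hv1 hv2 hv3
    obtain ⟨p1, hp1, q1, hq1, hne1⟩ := Finset.one_lt_card.mp (by omega : 1 < (Finset.univ.filter fun i => g i = v1).card)
    obtain ⟨p2, hp2, q2, hq2, hne2⟩ := Finset.one_lt_card.mp (by omega : 1 < (Finset.univ.filter fun i => g i = v2).card)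
    obtain ⟨p3, hp3, q3, hq3, hne3⟩ := Finset.one_lt_card.mp (by omega : 1 < (Finset.univ.filter fun i => g i = v3).card)
    simp only [Finset.mem_filter] at hp1 hq1 hp2 hq2 hp3 hq3
    refine ⟨p1, q1, p2, q2, p3, q3, hne1, ?_, ?_, ?_, ?_, ?_, ?_, ?_, ?_, hne2, ?_, ?_, ?_, ?_, hne3,
      hp1.2.trans hq1.2.symm, hp2.2.trans hq2.2.symm, hp3.2.trans hq3.2.symm⟩
    all_goals intro h
    · exact h12 (by rw [← hp1.2, h, hp2.2])
    · exact h12 (by rw [← hp1.2, h, hq2.2])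
    · exact h13 (by rw [← hp1.2, h, hp3.2])
    · exact h13 (by rw [← hp1.2, h, hq3.2])
    · exact h12 (by rw [← hq1.2, h, hp2.2])
    · exact h12 (by rw [← hq1.2, h, hq2.2])
    · exact h13 (by rw [← hq1.2, h, hp3.2])
    · exact h13 (by rw [← hq1.2, h, hq3.2])
    · exact h23 (by rw [← hp2.2, h, hp3.2])
    · exact h23 (by rw [← hp2.2, h, hq3.2])
    · exact h23 (by rw [← hq2.2, h, hp3.2])
    · exact h23 (by rw [← hq2.2, h, hq3.2])


/-- The degree-8 polynomial obtained by symmetrizing `F5111` over `S₈` (a highest weight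
vector of `S₅₁₁₁A ⊗ S₂₂₂₂B ⊗ S₂₂₂₂C ⊆ S⁸(A⊗B⊗C)*`) vanishes identically on every tensor of
the form `a₁⊗b₁⊗c₁ + ⋯ + a₅⊗b₅⊗c₅`, i.e. on the fifth secant variety
`σ₅(Seg(P³ × P³ × P³))`.  (By multilinearity, its value on such a sum is the sum over all
`g : {1,…,8} → {1,…,5}` of the values of the symmetrization of `F5111` at the corresponding
decomposable arguments.) -/

theorem symmetrized_F5111_vanishes_on_secant5 (a b c : Fin 5 → (Fin 4 → ℂ)) :
    ∑ g : Fin 8 → Fin 5, ∑ σ : Equiv.Perm (Fin 8),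
      F5111 (fun i => a (g (σ i))) (fun i => b (g (σ i))) (fun i => c (g (σ i))) = 0 := by
  apply Finset.sum_eq_zero
  intro g _
  rcases pigeon g with ⟨p, q, r, hpq, hpr, hqr, h1, h2⟩ |
    ⟨p1, q1, p2, q2, p3, q3, d1, d2, d3, d4, d5, d6, d7, d8, d9, d10, d11, d12, d13, d14, d15,
      e1', e2', e3'⟩
  · exact sum_zero_case1 (fun i => a (g i)) (fun i => b (g i)) (fun i => c (g i)) p q r
      hpq hpr hqr (congrArg a h1) (congrArg a h2) (congrArg b h1) (congrArg b h2)
      (congrArg c h1) (congrArg c h2)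
  · exact sum_zero_case2 (fun i => a (g i)) (fun i => b (g i)) (fun i => c (g i))
      p1 q1 p2 q2 p3 q3 d1 d2 d3 d4 d5 d6 d7 d8 d9 d10 d11 d12 d13 d14 d15
      (congrArg a e1') (congrArg b e1') (congrArg c e1')
      (congrArg a e2') (congrArg b e2') (congrArg c e2')
      (congrArg a e3') (congrArg b e3') (congrArg c e3')
end
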